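/- arXiv:1110.0760 — 6 statements merged into one kernel-verified Lean document; each statement's English description precedes it below -/
import Mathlib

section
/- Let α be a word with α ≠ ‾α and let w ∈ αΣ* ∩ Σ*‾α be non-α-crossing. Then every word obtainable from w by a single hairpin completion (left or right, with respect to α) is also non-α-crossing. -/
open List

namespace Hairpin

variable {S : Type} [DecidableEq S]

/-- Antimorphic extension of an involution to words. -/
def comp (bar : S → S) (w : List S) : List S := (w.map bar).reverse

/-- Right hairpin completion w.r.t. primer `a`. -/
def RH (bar : S → S) (a w z : List S) : Prop :=
  ∃ γ β : List S, w = γ ++ a ++ β ++ comp bar a ∧ z = w ++ comp bar γ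

/-- Left hairpin completion w.r.t. primer `a`. -/
def LH (bar : S → S) (a w z : List S) : Prop :=
  ∃ γ β : List S, w = a ++ β ++ comp bar a ++ comp bar γ ∧ z = γ ++ w

/-- One hairpin completion step. -/
def HC (bar : S → S) (a w z : List S) : Prop := RH bar a w z ∨ LH bar a w z

/-- Iterated hairpin completion `H*_α(w)`. -/
def HCstar (bar : S → S) (a w : List S) : Set (List S) :=
  { z | Relation.ReflTransGen (HC bar a) w z }

/-- `w` is non-`a`-crossing: every occurrence of `a` starts no later than
every occurrence of `comp bar a`. -/
def NonCrossing (bar : S → S) (a w : List S) : Prop :=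
  ∀ i j : ℕ, a <+: w.drop i → comp bar a <+: w.drop j → i ≤ j

/-- The set of `a`-prefixes of `w`. -/
def Pa (a w : List S) : Set (List S) := { u | u ++ a <+: w }

/-- The set of `‾a`-suffixes of `w` (the elements are the words `‾v`). -/
def Sa (bar : S → S) (a w : List S) : Set (List S) :=
  { x | comp bar a ++ x <:+ w }

/-- The set of complements of `‾a`-suffixes of `w`, i.e. `‾(S_‾α(w))`. -/
def barSa (bar : S → S) (a w : List S) : Set (List S) :=
  { v | comp bar a ++ comp bar v <:+ w }

/-- Kleene star of a set of words: all finite concatenations. -/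
def star (X : Set (List S)) : Set (List S) :=
  { x | ∃ l : List (List S), (∀ y ∈ l, y ∈ X) ∧ x = l.flatten }

/-- `ind_α(x)`: the number of occurrences of `a` in `x ++ a` other than the
suffix occurrence, i.e. the number of positions `i < |x|` where `a` occurs. -/
def inda (a x : List S) : ℕ :=
  ((Finset.range x.length).filter (fun i => a <+: (x ++ a).drop i)).card

end Hairpin

/-!
Complementation reverses positions and exchanges occurrences of `α` and `‾α`, so it preserves
being non-`α`-crossing and turns a left completion of `w` into a right completion of `‾w`. For a
right completion `w = γαβ‾α ↦ w‾γ`, an occurrence of `‾α` that is not inside `w` starts after the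
last possible start of `α` in `w`. An occurrence of `α` that is not inside `w` is impossible: its
complement would be an occurrence of `‾α` inside the prefix `γα` shared by `w` and `‾(w‾γ)`, hence
one in `w` starting before the occurrence of `α` after `γ`.
-/

namespace Hairpin

section General

variable {α : Type*}

theorem isPrefix_drop_iff {u x : List α} {i : ℕ} (hu : u ≠ []) :
    u <+: x.drop i ↔ ∃ l r, x = l ++ u ++ r ∧ l.length = i := by
  constructor
  · rintro ⟨r, hr⟩
    have hi : i ≤ x.length := by
      by_contra! hlt
      simp [List.drop_of_length_le hlt.le, hu] at hr
    refine ⟨x.take i, r, ?_, by simp [hi]⟩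
    rw [List.append_assoc, hr, List.take_append_drop]
  · rintro ⟨l, r, rfl, rfl⟩
    rw [List.append_assoc, List.drop_left]
    exact List.prefix_append u r

theorem exists_eq_append_append_of_length_le {p x l u r : List α} (h : p ++ x = l ++ u ++ r)
    (hle : l.length + u.length ≤ p.length) : ∃ r', p = l ++ u ++ r' := by
  obtain ⟨r', hr'⟩ := List.prefix_of_prefix_length_le ⟨r, h.symm⟩ (List.prefix_append p x)
    (by simpa using hle)
  exact ⟨r', hr'.symm⟩

end General

variable {S : Type} {bar : S → S} {a w z : List S}

theorem comp_append (u v : List S) : comp bar (u ++ v) = comp bar v ++ comp bar u := by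
  simp [comp]

@[simp]
theorem length_comp (u : List S) : (comp bar u).length = u.length := by
  simp [comp]

theorem comp_comp (hbar : Function.Involutive bar) (u : List S) :
    comp bar (comp bar u) = u := by
  simp [comp, List.map_reverse, hbar.comp_self]

theorem comp_eq_nil_iff {u : List S} : comp bar u = [] ↔ u = [] := by
  simp [comp]

theorem NonCrossing.ne_nil (hnc : NonCrossing bar a w) : a ≠ [] := by
  rintro rfl
  have := hnc 1 0 List.nil_prefix List.nil_prefix
  omega

theorem nonCrossing_iff (ha : a ≠ []) :
    NonCrossing bar a w ↔ ∀ l₁ r₁ l₂ r₂, w = l₁ ++ a ++ r₁ → w = l₂ ++ comp bar a ++ r₂ →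
      l₁.length ≤ l₂.length := by
  have ha' : comp bar a ≠ [] := comp_eq_nil_iff.not.mpr ha
  constructor
  · intro hnc l₁ r₁ l₂ r₂ h₁ h₂
    exact hnc _ _ ((isPrefix_drop_iff ha).mpr ⟨l₁, r₁, h₁, rfl⟩)
      ((isPrefix_drop_iff ha').mpr ⟨l₂, r₂, h₂, rfl⟩)
  · intro h i j hi hj
    obtain ⟨l₁, r₁, h₁, rfl⟩ := (isPrefix_drop_iff ha).mp hi
    obtain ⟨l₂, r₂, h₂, rfl⟩ := (isPrefix_drop_iff ha').mp hj
    exact h l₁ r₁ l₂ r₂ h₁ h₂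

theorem nonCrossing_comp (hbar : Function.Involutive bar) (hnc : NonCrossing bar a w) :
    NonCrossing bar a (comp bar w) := by
  have ha := hnc.ne_nil
  rw [nonCrossing_iff ha] at hnc ⊢
  intro l₁ r₁ l₂ r₂ h₁ h₂
  have h₁' : w = comp bar r₁ ++ comp bar a ++ comp bar l₁ := by
    rw [← comp_comp hbar w, h₁, comp_append, comp_append]
    simp only [List.append_assoc]
  have h₂' : w = comp bar r₂ ++ a ++ comp bar l₂ := by
    rw [← comp_comp hbar w, h₂, comp_append, comp_append, comp_comp hbar]
    simp only [List.append_assoc]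
  have hle := hnc _ _ _ _ h₂' h₁'
  have hlen₁ := congrArg List.length h₁'
  have hlen₂ := congrArg List.length h₂'
  simp only [List.length_append, length_comp] at hle hlen₁ hlen₂
  omega

theorem nonCrossing_comp_iff (hbar : Function.Involutive bar) :
    NonCrossing bar a (comp bar w) ↔ NonCrossing bar a w :=
  ⟨fun h => comp_comp hbar w ▸ nonCrossing_comp hbar h, nonCrossing_comp hbar⟩

theorem NonCrossing.of_rh (hbar : Function.Involutive bar) (hnc : NonCrossing bar a w)
    (h : RH bar a w z) : NonCrossing bar a z := by
  have ha := hnc.ne_nil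
  obtain ⟨γ, β, hw, rfl⟩ := h
  rw [nonCrossing_iff ha] at hnc ⊢
  intro l₁ r₁ l₂ r₂ h₁ h₂
  have hin₁ : l₁.length + a.length ≤ w.length := by
    by_contra! hout
    have hlen := congrArg List.length h₁
    simp only [List.length_append, length_comp] at hlen
    have hcz : (γ ++ a) ++ (comp bar β ++ comp bar a ++ comp bar γ)
        = comp bar r₁ ++ comp bar a ++ comp bar l₁ := by
      have hcz₁ : comp bar (w ++ comp bar γ) = comp bar r₁ ++ comp bar a ++ comp bar l₁ := by
        rw [h₁, comp_append, comp_append, List.append_assoc]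
      rw [← hcz₁, hw]
      simp only [comp_append, comp_comp hbar, List.append_assoc]
    obtain ⟨r, hr⟩ := exists_eq_append_append_of_length_le hcz (by simp only [List.length_append, length_comp]; omega)
    have := hnc γ (β ++ comp bar a) (comp bar r₁) (r ++ β ++ comp bar a)
      (by rw [hw]; simp only [List.append_assoc])
      (by rw [hw, hr]; simp only [List.append_assoc])
    simp only [length_comp] at this
    omega
  obtain ⟨r₁', h₁'⟩ := exists_eq_append_append_of_length_le h₁ hin₁
  by_cases hin₂ : l₂.length + a.length ≤ w.length
  · obtain ⟨r₂', h₂'⟩ := exists_eq_append_append_of_length_le h₂ (by rwa [length_comp])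
    exact hnc _ _ _ _ h₁' h₂'
  · omega

theorem rh_comp_of_lh (hbar : Function.Involutive bar) (h : LH bar a w z) :
    RH bar a (comp bar w) (comp bar z) := by
  obtain ⟨γ, β, rfl, rfl⟩ := h
  refine ⟨γ, comp bar β, ?_, ?_⟩
  · simp only [comp_append, comp_comp hbar, List.append_assoc]
  · simp only [comp_append, List.append_assoc]

variable [DecidableEq S]

theorem stmt1_general (bar : S → S) (hbar : Function.Involutive bar)
    (a w : List S)
    (hnc : NonCrossing bar a w) :
    ∀ z : List S, HC bar a w z → NonCrossing bar a z := by
  rintro z (h | h)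
  · exact hnc.of_rh hbar h
  · rw [← nonCrossing_comp_iff hbar]
    exact ((nonCrossing_comp_iff hbar).mpr hnc).of_rh hbar (rh_comp_of_lh hbar h)

theorem stmt1 (bar : S → S) (hbar : Function.Involutive bar)
    (a w : List S) (ha : a ≠ comp bar a)
    (hp : a <+: w) (hs : comp bar a <:+ w)
    (hnc : NonCrossing bar a w) :
    ∀ z : List S, HC bar a w z → NonCrossing bar a z :=
  stmt1_general bar hbar a w hnc

end Hairpin
end

section
/- A word w ∈ αΣ* ∩ Σ*‾α is non-α-crossing if and only if w contains exactly one factor that is minimal with respect to the language αΣ* ∩ Σ*‾α. -/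
open List

namespace Hairpin

variable {S : Type} [DecidableEq S]

/-!
A factor of `w` starting with `a` and ending with `b`, where `|a| = |b|`, is minimal exactly when
no other occurrence of `a` or `b` fits inside it: cutting the factor at such an occurrence leaves a
shorter factor that still starts with `a` and ends with `b`. In a non-crossing word every occurrence
of `a` lies before every occurrence of `b`, so a minimal factor must start at the last occurrence of
`a` and end with the first occurrence of `b`; this pins it down, and one exists because `w` itself
starts with `a` and ends with `b`. Conversely, if `a` occurs at `i` and `b` at `j < i`, then the
prefix of `w` ending with that `b` and the suffix starting with that `a` each contain a minimal
factor, the first starting at or before `j` and the second at or after `i`, so the two are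
different.
-/

section MinimalFactors

variable {α : Type*} {a b w x y : List α} {i j k : ℕ}

def IsMinimalFactor (P : List α → Prop) (x : List α) : Prop :=
  P x ∧ ∀ y, y <:+: x → y ≠ x → ¬P y

def HasPrefixSuffix (a b x : List α) : Prop := a <+: x ∧ b <:+ x

theorem exists_infix_isMinimalFactor {P : List α → Prop} (hx : P x) :
    ∃ y, y <:+: x ∧ IsMinimalFactor P y := by
  induction hn : x.length using Nat.strong_induction_on generalizing x with
  | _ n ih =>
    by_cases hmin : ∀ y, y <:+: x → y ≠ x → ¬P y
    · exact ⟨x, List.infix_refl x, hx, hmin⟩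
    · push Not at hmin
      obtain ⟨y, hyx, hne, hy⟩ := hmin
      have hlt : y.length < n :=
        hn ▸ lt_of_le_of_ne hyx.length_le fun h => hne (hyx.eq_of_length h)
      obtain ⟨z, hzy, hz⟩ := ih _ hlt hy rfl
      exact ⟨z, hzy.trans hyx, hz⟩

theorem drop_prefix_drop_add (hx : x <+: w.drop i) (k : ℕ) : x.drop k <+: w.drop (i + k) := by
  simpa only [List.drop_drop] using hx.drop k

theorem exists_prefix_drop_of_infix (hy : y <:+: x) (hx : x <+: w.drop i) :
    ∃ k, i ≤ k ∧ k + y.length ≤ i + x.length ∧ y <+: w.drop k := by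
  obtain ⟨s, t, rfl⟩ := hy
  refine ⟨i + s.length, by omega, by simp only [List.length_append]; omega, ?_⟩
  have := drop_prefix_drop_add hx s.length
  rw [List.append_assoc, List.drop_left] at this
  exact (List.prefix_append y t).trans this

theorem exists_prefix_drop_isMinimalFactor {P : List α → Prop} (hx : x <+: w.drop i)
    (hPx : P x) :
    ∃ k y, i ≤ k ∧ k + y.length ≤ i + x.length ∧ y <+: w.drop k ∧ IsMinimalFactor P y := by
  obtain ⟨y, hyx, hy⟩ := exists_infix_isMinimalFactor hPx
  obtain ⟨k, hik, hk, hyw⟩ := exists_prefix_drop_of_infix hyx hx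
  exact ⟨k, y, hik, hk, hyw, hy⟩

theorem prefix_drop_of_suffix (hb : b <:+ x) (hx : x <+: w.drop i) :
    b <+: w.drop (i + (x.length - b.length)) := by
  obtain ⟨t, rfl⟩ := hb
  simpa only [List.length_append, Nat.add_sub_cancel, List.drop_left] using
    drop_prefix_drop_add hx t.length

theorem prefix_drop_sub_of_prefix_drop (hy : y <+: w.drop k) (hx : x <+: w.drop i) (hik : i ≤ k)
    (hlen : k + y.length ≤ i + x.length) : y <+: x.drop (k - i) := by
  have hxk : x.drop (k - i) <+: w.drop k := by
    simpa only [Nat.add_sub_cancel' hik] using drop_prefix_drop_add hx (k - i)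
  exact List.prefix_of_prefix_length_le hy hxk (by rw [List.length_drop]; omega)

theorem suffix_take_of_prefix_drop (hy : y <+: w.drop j) : y <:+ w.take (j + y.length) := by
  have hdrop : (w.take (j + y.length)).drop j = y := by
    rw [List.drop_take, Nat.add_sub_cancel_left, ← List.prefix_iff_eq_take.mp hy]
  simpa only [hdrop] using List.drop_suffix j (w.take (j + y.length))

variable (hab : b.length = a.length)
include hab

theorem HasPrefixSuffix.prefix_drop (h : HasPrefixSuffix a b x) (hx : x <+: w.drop i) :
    a <+: w.drop i ∧ b <+: w.drop (i + (x.length - a.length)) :=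
  ⟨h.1.trans hx, hab ▸ prefix_drop_of_suffix h.2 hx⟩

theorem IsMinimalFactor.eq_of_prefix_drop (hmin : IsMinimalFactor (HasPrefixSuffix a b) x)
    (hx : x <+: w.drop i) (hk : a <+: w.drop k) (hik : i ≤ k)
    (hkx : k + a.length ≤ i + x.length) : k = i := by
  have hay : a <+: x.drop (k - i) := prefix_drop_sub_of_prefix_drop hk hx hik hkx
  have hby : b <:+ x.drop (k - i) :=
    List.suffix_of_suffix_length_le hmin.1.2 (List.drop_suffix _ x) (hab ▸ hay.length_le)
  by_contra hne
  refine hmin.2 _ (List.drop_suffix _ x).isInfix (fun h => hne ?_) ⟨hay, hby⟩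
  have := congrArg List.length h
  rw [List.length_drop] at this
  omega

theorem IsMinimalFactor.add_length_eq_of_prefix_drop
    (hmin : IsMinimalFactor (HasPrefixSuffix a b) x) (hx : x <+: w.drop i)
    (hj : b <+: w.drop j) (hij : i ≤ j) (hjx : j + a.length ≤ i + x.length) :
    j + a.length = i + x.length := by
  have hbx : b <+: x.drop (j - i) := prefix_drop_sub_of_prefix_drop hj hx hij (by omega)
  have hby : b <:+ x.take (j - i + a.length) := hab ▸ suffix_take_of_prefix_drop hbx
  have hay : a <+: x.take (j - i + a.length) := List.prefix_take_iff.mpr ⟨hmin.1.1, by omega⟩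
  by_contra hne
  refine hmin.2 _ (List.take_prefix _ x).isInfix (fun h => hne ?_) ⟨hay, hby⟩
  have := congrArg List.length h
  rw [List.length_take] at this
  omega

variable (hnc : ∀ i j, a <+: w.drop i → b <+: w.drop j → i ≤ j)
include hnc

theorem IsMinimalFactor.le_of_prefix_drop (hmin : IsMinimalFactor (HasPrefixSuffix a b) x)
    (hx : x <+: w.drop i) (hk : a <+: w.drop k) : k ≤ i := by
  have hkb := hnc _ _ hk (hmin.1.prefix_drop hab hx).2
  have hax := hmin.1.1.length_le
  by_contra hlt
  exact hlt (hmin.eq_of_prefix_drop hab hx hk (by omega) (by omega)).le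

theorem IsMinimalFactor.add_sub_le_of_prefix_drop
    (hmin : IsMinimalFactor (HasPrefixSuffix a b) x) (hx : x <+: w.drop i)
    (hj : b <+: w.drop j) : i + (x.length - a.length) ≤ j := by
  have hij := hnc _ _ (hmin.1.prefix_drop hab hx).1 hj
  have hax := hmin.1.1.length_le
  by_contra hlt
  have := hmin.add_length_eq_of_prefix_drop hab hx hj hij (by omega)
  omega

theorem IsMinimalFactor.eq_of_isMinimalFactor (hminx : IsMinimalFactor (HasPrefixSuffix a b) x)
    (hx : x <+: w.drop i) (hminy : IsMinimalFactor (HasPrefixSuffix a b) y)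
    (hy : y <+: w.drop k) : k = i ∧ y = x := by
  have hki := hminx.le_of_prefix_drop hab hnc hx (hminy.1.prefix_drop hab hy).1
  have hik := hminy.le_of_prefix_drop hab hnc hy (hminx.1.prefix_drop hab hx).1
  have hxy := hminx.add_sub_le_of_prefix_drop hab hnc hx (hminy.1.prefix_drop hab hy).2
  have hyx := hminy.add_sub_le_of_prefix_drop hab hnc hy (hminx.1.prefix_drop hab hx).2
  have hax := hminx.1.1.length_le
  have hay := hminy.1.1.length_le
  obtain rfl : k = i := by omega
  exact ⟨rfl, (List.prefix_of_prefix_length_le hy hx (by omega)).eq_of_length (by omega)⟩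

end MinimalFactors

theorem nonCrossing_iff_existsUnique_isMinimalFactor {α : Type*} {a b w : List α}
    (hab : b.length = a.length) (hp : a <+: w) (hs : b <:+ w) :
    (∀ i j, a <+: w.drop i → b <+: w.drop j → i ≤ j) ↔
      ∃! p : ℕ × List α, p.2 <+: w.drop p.1 ∧ IsMinimalFactor (HasPrefixSuffix a b) p.2 := by
  constructor
  · intro hnc
    obtain ⟨k, y, -, -, hy, hmin⟩ :=
      exists_prefix_drop_isMinimalFactor (P := HasPrefixSuffix a b) (i := 0) (List.prefix_refl w)
        ⟨hp, hs⟩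
    refine ⟨(k, y), ⟨hy, hmin⟩, ?_⟩
    rintro ⟨k', y'⟩ ⟨hy', hmin'⟩
    obtain ⟨rfl, rfl⟩ := hmin.eq_of_isMinimalFactor hab hnc hy hmin' hy'
    rfl
  · intro huniq i j hi hj
    by_contra! hji
    have hleft : HasPrefixSuffix a b (w.take (j + a.length)) :=
      ⟨List.prefix_take_iff.mpr ⟨hp, by omega⟩, hab ▸ suffix_take_of_prefix_drop hj⟩
    have hright : HasPrefixSuffix a b (w.drop i) :=
      ⟨hi, List.suffix_of_suffix_length_le hs (List.drop_suffix i w) (hab ▸ hi.length_le)⟩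
    obtain ⟨k₁, y₁, -, hk₁, hy₁, hmin₁⟩ :=
      exists_prefix_drop_isMinimalFactor (i := 0) (List.take_prefix _ w) hleft
    obtain ⟨k₂, y₂, hk₂, -, hy₂, hmin₂⟩ :=
      exists_prefix_drop_isMinimalFactor (List.prefix_refl (w.drop i)) hright
    have hk : k₁ = k₂ := congrArg Prod.fst
      (huniq.unique (y₁ := (k₁, y₁)) (y₂ := (k₂, y₂)) ⟨hy₁, hmin₁⟩ ⟨hy₂, hmin₂⟩)
    have := List.length_take_le (j + a.length) w
    have := hmin₁.1.1.length_le
    omega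

theorem stmt2_general (bar : S → S) (a w : List S) (hp : a <+: w) (hs : comp bar a <:+ w) :
    NonCrossing bar a w ↔
      ∃! p : ℕ × List S,
        p.2 <+: w.drop p.1 ∧
        (a <+: p.2 ∧ comp bar a <:+ p.2) ∧
        ∀ y : List S, y <:+: p.2 → y ≠ p.2 → ¬(a <+: y ∧ comp bar a <:+ y) :=
  nonCrossing_iff_existsUnique_isMinimalFactor (by simp [comp]) hp hs

theorem stmt2 (bar : S → S) (hbar : Function.Involutive bar)
    (a w : List S) (ha : a ≠ comp bar a)
    (hp : a <+: w) (hs : comp bar a <:+ w) :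
    NonCrossing bar a w ↔
      ∃! p : ℕ × List S,
        p.2 <+: w.drop p.1 ∧
        (a <+: p.2 ∧ comp bar a <:+ p.2) ∧
        ∀ y : List S, y <:+: p.2 → y ≠ p.2 → ¬(a <+: y ∧ comp bar a <:+ y) :=
  stmt2_general bar a w hp hs

end Hairpin
end

section
/- Let w ∈ αΣ* ∩ Σ*‾α, let u ∈ P_α(w) and ‾v ∈ S_‾α(w). If v ∈ (P_α(uα))* and u ∈ (‾(S_‾α(‾α‾v)))*, then (P_α(uα))* = (‾(S_‾α(‾α‾v)))*. -/
open List

namespace Hairpin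

variable {S : Type} [DecidableEq S]

/-
Because `‾` is an injective antimorphism, `‾(S_‾α(‾α‾v)) = P_α(vα)`, so the claim is symmetric
in `u` and `v`; moreover `α ≤ uα` and `α ≤ vα` in the prefix order. It then suffices
that `P_α(xα) ⊆ P_α(w)*` whenever `α ≤ w` and `x ∈ P_α(w)*`. First, `α ≤ xα` for all such `x`,
since `α ≤ pα` for every `p ∈ P_α(w)` and this property is closed under concatenation. Now cut an
`α`-prefix `q` of `xα` against a factorisation `x = p x'`: either `q = p q'` and we recurse on `x'`,
or `p = q t`, and then `α ≤ t x' α` together with `α ≤ x' α` gives `α ≤ tα`, hence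
`qα ≤ qtα = pα ≤ w`.
-/

section Words

variable {α : Type*} {a p t w x y : List α}

theorem prefix_append_of_prefix (ha : a <+: w) (hp : p ++ a <+: w) : a <+: p ++ a :=
  prefix_of_prefix_length_le ha hp (by simp)

theorem prefix_append_append (hx : a <+: x ++ a) (hy : a <+: y ++ a) : a <+: x ++ y ++ a := by
  obtain ⟨r, hr⟩ := hy
  calc a <+: x ++ a := hx
    _ <+: x ++ a ++ r := prefix_append _ _
    _ = x ++ y ++ a := by rw [append_assoc, hr, append_assoc]

theorem prefix_append_of_prefix_append_append (hx : a <+: x ++ a) (h : a <+: t ++ x ++ a) :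
    a <+: t ++ a := by
  obtain ⟨r, hr⟩ := hx
  rw [append_assoc, ← hr, ← append_assoc] at h
  exact prefix_of_prefix_length_le h (prefix_append _ _) (by simp)

end Words

section Star

variable {α : Type} {X Y : Set (List α)} {p x : List α}

theorem star_eq_kstar (X : Set (List α)) : star X = KStar.kstar (α := Language α) X := by
  rw [Language.kstar_def (l := X)]
  ext x
  exact ⟨fun ⟨l, hl, hx⟩ => ⟨l, hx, hl⟩, fun ⟨l, hx, hl⟩ => ⟨l, hl, hx⟩⟩

theorem mem_star_of_mem (hp : p ∈ X) : p ∈ star X :=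
  ⟨[p], by simpa using hp, by simp⟩

theorem append_mem_star (hp : p ∈ X) (hx : x ∈ star X) : p ++ x ∈ star X := by
  obtain ⟨l, hl, rfl⟩ := hx
  exact ⟨p :: l, forall_mem_cons.2 ⟨hp, hl⟩, rfl⟩

theorem star_subset_star (h : X ⊆ star Y) : star X ⊆ star Y := by
  simp only [star_eq_kstar] at h ⊢
  exact (kstar_mono (α := Language α) h).trans_eq (kstar_idem _)

end Star

section Primer

variable {α : Type} {a w x y q v : List α}

theorem prefix_append_of_mem_star (ha : a <+: w) (hx : x ∈ star (Pa a w)) : a <+: x ++ a := by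
  obtain ⟨l, hl, rfl⟩ := hx
  induction l with
  | nil => simp
  | cons p l ih =>
    obtain ⟨hp, hl⟩ := forall_mem_cons.1 hl
    exact prefix_append_append (prefix_append_of_prefix ha hp) (ih hl)

theorem mem_star_of_append_prefix (ha : a <+: w) (hx : x ∈ star (Pa a w))
    (hq : q ++ a <+: x ++ a) : q ∈ star (Pa a w) := by
  obtain ⟨l, hl, rfl⟩ := hx
  induction l generalizing q with
  | nil =>
    obtain rfl : q = [] := length_eq_zero_iff.1 (by simpa using hq.length_le)
    exact ⟨[], by simp, rfl⟩
  | cons p l ih =>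
    rw [forall_mem_cons] at hl
    obtain ⟨hp, hl⟩ := hl
    rw [flatten_cons, append_assoc] at hq
    rcases le_total p.length q.length with hpq | hqp
    · obtain ⟨q, rfl⟩ :=
        prefix_of_prefix_length_le (prefix_append _ _) ((prefix_append _ _).trans hq) hpq
      rw [append_assoc, prefix_append_right_inj] at hq
      exact append_mem_star hp (ih hl hq)
    · obtain ⟨t, rfl⟩ :=
        prefix_of_prefix_length_le ((prefix_append _ _).trans hq) (prefix_append _ _) hqp
      rw [append_assoc, prefix_append_right_inj, ← append_assoc] at hq
      have hta : a <+: t ++ a :=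
        prefix_append_of_prefix_append_append (prefix_append_of_mem_star ha ⟨l, hl, rfl⟩) hq
      refine mem_star_of_mem ?_
      calc q ++ a <+: q ++ (t ++ a) := (prefix_append_right_inj q).2 hta
        _ = q ++ t ++ a := (append_assoc _ _ _).symm
        _ <+: w := hp

theorem star_Pa_subset (ha : a <+: w) (hx : x ∈ star (Pa a w)) :
    star (Pa a (x ++ a)) ⊆ star (Pa a w) :=
  star_subset_star fun _ hq => mem_star_of_append_prefix ha hx hq

variable {bar : α → α}

theorem comp_append_s8 : comp bar (x ++ y) = comp bar y ++ comp bar x := by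
  simp [comp]

theorem comp_suffix_comp_iff (hbar : Function.Injective bar) :
    comp bar x <:+ comp bar y ↔ x <+: y :=
  reverse_suffix.trans (prefix_map_iff_of_injective hbar)

theorem barSa_comp_append_comp (hbar : Function.Injective bar) :
    barSa bar a (comp bar a ++ comp bar v) = Pa a (v ++ a) := by
  ext q
  show comp bar a ++ comp bar q <:+ comp bar a ++ comp bar v ↔ q ++ a <+: v ++ a
  rw [← comp_append_s8, ← comp_append_s8, comp_suffix_comp_iff hbar]

theorem prefix_append_of_mem_barSa (hbar : Function.Injective bar) (hs : comp bar a <:+ w)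
    (hv : v ∈ barSa bar a w) : a <+: v ++ a := by
  rw [barSa, Set.mem_ofPred_eq, ← comp_append_s8] at hv
  exact (comp_suffix_comp_iff hbar).1 (suffix_of_suffix_length_le hs hv (by simp [comp]))

end Primer

theorem stmt8 (bar : S → S) (hbar : Function.Involutive bar)
    (a w u v : List S) (hp : a <+: w) (hs : comp bar a <:+ w)
    (hu : u ∈ Pa a w) (hv : v ∈ barSa bar a w)
    (h1 : v ∈ star (Pa a (u ++ a)))
    (h2 : u ∈ star (barSa bar a (comp bar a ++ comp bar v))) :
    star (Pa a (u ++ a)) = star (barSa bar a (comp bar a ++ comp bar v)) := by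
  rw [barSa_comp_append_comp hbar.injective] at h2 ⊢
  have hau : a <+: u ++ a := prefix_append_of_prefix hp hu
  have hav : a <+: v ++ a := prefix_append_of_mem_barSa hbar.injective hs hv
  exact (star_Pa_subset hav h2).antisymm (star_Pa_subset hau h1)

end Hairpin
end

section
/- Let x ∈ αΣ*α⁻¹ (i.e., α is a prefix of xα) and y ∈ Σ*. Then ind_α(yx) = ind_α(y) + ind_α(x), where ind_α(z) counts the number of occurrences of α as a factor of zα other than the suffix occurrence. -/
/-!
Positions of `y ++ x` inside `x` contribute exactly `ind_α(x)`. Whether `α` occurs at a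
position inside `y` depends only on the next `|α|` letters, and since `α` is a prefix of `xα`
these letters are the same in `yxα` as in `yα`.
-/

open List

namespace Hairpin

variable {S : Type} [DecidableEq S]

theorem take_length_append_of_prefix {α : Type*} {a w : List α} (h : a <+: w) (u : List α) :
    (u ++ w).take a.length = (u ++ a).take a.length := by
  obtain ⟨t, rfl⟩ := h
  rw [← List.append_assoc, List.take_append_of_le_length (by simp)]

theorem prefix_append_iff_of_prefix {α : Type*} {a w : List α} (h : a <+: w) (u : List α) :
    a <+: u ++ w ↔ a <+: u ++ a := by
  rw [List.prefix_iff_eq_take, List.prefix_iff_eq_take, take_length_append_of_prefix h]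

theorem inda_append (a x y : List S) :
    inda a (y ++ x) =
      ((Finset.range y.length).filter (fun i => a <+: y.drop i ++ (x ++ a))).card + inda a x := by
  unfold inda
  rw [Finset.card_filter, Finset.card_filter, Finset.card_filter, List.length_append,
    Finset.sum_range_add]
  congr 1
  · refine Finset.sum_congr rfl fun i hi => ?_
    rw [List.append_assoc, List.drop_append_of_le_length (Finset.mem_range.mp hi).le]
  · refine Finset.sum_congr rfl fun i _ => ?_
    rw [List.append_assoc, List.drop_length_add_append]

theorem stmt9 (a x y : List S) (hx : a <+: x ++ a) :
    inda a (y ++ x) = inda a y + inda a x := by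
  rw [inda_append, inda]
  congr 2
  refine Finset.filter_congr fun i hi => ?_
  rw [List.drop_append_of_le_length (Finset.mem_range.mp hi).le]
  exact prefix_append_iff_of_prefix hx _

end Hairpin
end

section
/- Let w be a word, let P_α(w) = {u₀, …, u_{m−1}} with u₀ <_p u₁ <_p ⋯ <_p u_{m−1} (ordered by the strict prefix order), let x ∈ αΣ*α⁻¹, and let 0 ≤ j < m. If x is a suffix of u_j, then u_j = u_{j − ind_α(x)} · x. -/
/-!
Write `u j = p ++ x`. Since `a` is a prefix of `x ++ a`, the word `p` is itself an `α`-prefix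
of `w`, say `p = u k`. The `α`-prefixes of `w` of length in `[|p|, |p ++ x|)` are exactly the words
`p ++ x.take s` for the positions `s < |x|` at which `a` occurs in `x ++ a`. Since the `u i` are
ordered by length, these are the `u i` with `k ≤ i < j`, hence `ind_α(x) = j - k`.
-/

open List

namespace Hairpin

variable {S : Type} [DecidableEq S]

theorem _root_.List.append_take_append_prefix_iff {α : Type*} {p x a w : List α}
    (h : p ++ x ++ a <+: w) {s : ℕ} (hs : s ≤ x.length) :
    p ++ x.take s ++ a <+: w ↔ a <+: (x ++ a).drop s := by
  have hshift : p ++ x.take s ++ a <+: p ++ x ++ a ↔ a <+: (x ++ a).drop s := by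
    have hxa : x ++ a = x.take s ++ (x ++ a).drop s := by
      rw [List.drop_append_of_le_length hs, ← List.append_assoc, List.take_append_drop]
    generalize (x ++ a).drop s = d at hxa ⊢
    rw [List.append_assoc p x, hxa]
    simp only [List.append_assoc, List.prefix_append_right_inj]
  refine ⟨fun hv => hshift.mp (List.prefix_of_prefix_length_le hv h ?_),
    fun ha => (hshift.mpr ha).trans h⟩
  simp only [List.length_append, List.length_take]
  omega

theorem _root_.List.eq_append_take_of_prefix {α : Type*} {p x v w : List α}
    (hv : v <+: w) (hpx : p ++ x <+: w) (hp : p.length ≤ v.length)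
    (hvx : v.length ≤ (p ++ x).length) :
    v = p ++ x.take (v.length - p.length) :=
  calc v = (p ++ x).take v.length :=
        List.prefix_iff_eq_take.mp (List.prefix_of_prefix_length_le hv hpx hvx)
    _ = p ++ x.take (v.length - p.length) := by
        rw [List.take_append, List.take_of_length_le hp]

theorem strictMono_length_of_prefix_chain {ι α : Type*} [Preorder ι] {u : ι → List α}
    (hu : ∀ i j, i < j → u i <+: u j ∧ u i ≠ u j) : StrictMono (fun i => (u i).length) :=
  fun i j hij => lt_of_le_of_ne (hu i j hij).1.length_le
    fun hlen => (hu i j hij).2 ((hu i j hij).1.eq_of_length hlen)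

theorem inda_eq_card_Ico {a w p x : List S} {m : ℕ} {u : Fin m → List S}
    (hlen : StrictMono (fun t => (u t).length)) (hPu : Pa a w = Set.range u)
    {k j : Fin m} (hk : u k = p) (hj : u j = p ++ x) :
    inda a x = (Finset.Ico k j).card := by
  have hmem : ∀ v, v ++ a <+: w ↔ v ∈ Set.range u := fun v => by rw [← hPu]; rfl
  have hpxa : p ++ x ++ a <+: w := hj ▸ (hmem _).mpr ⟨j, rfl⟩
  have hLk : (u k).length = p.length := by rw [hk]
  have hLj : (u j).length = p.length + x.length := by rw [hj, List.length_append]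
  symm
  apply Finset.card_nbij (fun t => (u t).length - p.length)
  · intro t ht
    obtain ⟨hkt, htj⟩ := Finset.mem_Ico.mp ht
    have hge : p.length ≤ (u t).length := hLk ▸ hlen.monotone hkt
    have hlt : (u t).length < p.length + x.length := hLj ▸ hlen htj
    have hut := List.eq_append_take_of_prefix ((List.prefix_append _ a).trans
      ((hmem _).mpr ⟨t, rfl⟩)) ((List.prefix_append _ a).trans hpxa) hge
      (by rw [List.length_append]; omega)
    have hs : (u t).length - p.length < x.length := by omega
    refine Finset.mem_filter.mpr ⟨Finset.mem_range.mpr hs, ?_⟩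
    rw [← List.append_take_append_prefix_iff hpxa hs.le, ← hut]
    exact (hmem _).mpr ⟨t, rfl⟩
  · intro t₁ ht₁ t₂ ht₂ heq
    have h₁ : p.length ≤ (u t₁).length := hLk ▸ hlen.monotone (Finset.mem_Ico.mp ht₁).1
    have h₂ : p.length ≤ (u t₂).length := hLk ▸ hlen.monotone (Finset.mem_Ico.mp ht₂).1
    exact hlen.injective (by simp only at heq ⊢; omega)
  · intro s hs
    obtain ⟨hs, hocc⟩ := Finset.mem_filter.mp hs
    have hs := Finset.mem_range.mp hs
    obtain ⟨t, ht⟩ := (hmem _).mp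
      ((List.append_take_append_prefix_iff hpxa hs.le).mpr hocc)
    have hLt : (u t).length = p.length + s := by
      rw [ht, List.length_append, List.length_take, min_eq_left hs.le]
    refine ⟨t, Finset.mem_Ico.mpr ⟨hlen.le_iff_le.mp ?_, hlen.lt_iff_lt.mp ?_⟩, ?_⟩
    all_goals simp only [hLt, hLk, hLj]; omega

theorem stmt10 (a w : List S) (m : ℕ) (u : Fin m → List S)
    (huchain : ∀ i j : Fin m, i < j → u i <+: u j ∧ u i ≠ u j)
    (hPu : Pa a w = Set.range u)
    (x : List S) (hx : a <+: x ++ a) (j : Fin m) (hsuf : x <:+ u j) :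
    ∃ h : inda a x ≤ (j : ℕ),
      u j = u ⟨(j : ℕ) - inda a x,
        lt_of_le_of_lt (Nat.sub_le _ _) j.isLt⟩ ++ x := by
  obtain ⟨p, hp⟩ := hsuf
  have hlen := strictMono_length_of_prefix_chain huchain
  have hja : u j ++ a <+: w := show u j ∈ Pa a w from hPu ▸ ⟨j, rfl⟩
  have hpa : p ∈ Pa a w := by
    rw [← hp, List.append_assoc] at hja
    exact ((List.prefix_append_right_inj p).mpr hx).trans hja
  obtain ⟨k, hk⟩ : p ∈ Set.range u := hPu ▸ hpa
  have hkj : k ≤ j := hlen.le_iff_le.mp (by simp only [← hp, hk, List.length_append]; omega)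
  have hind : inda a x = j - k := by
    rw [inda_eq_card_Ico hlen hPu hk hp.symm, Fin.card_Ico]
  refine ⟨by omega, ?_⟩
  rw [← hp, ← hk]
  congr
  ext
  simp only [hind]
  omega

end Hairpin
end

section
/- Let w ∈ αΣ* and let P_α(w) = {u₀, …, u_{m−1}} with u₀ <_p ⋯ <_p u_{m−1}. If 0 ≤ i ≤ j < m and u_i is a suffix of u_j, then u_j = u_{j−i} · u_i. -/
open List

/-!
Write `u j = t ++ u i`. Since `u i ++ a` starts with `a`, `t ++ a` is a prefix of `u j ++ a`,
so `t = u k` for some `k`. The index `inda a (u l)` counts the `a`-prefixes of `w` strictly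
shorter than `u l`, hence equals `l`; and it is additive on `t ++ u i`, because an occurrence of
`a` starting inside `t` lies in `t ++ a` exactly when it lies in `t ++ u i ++ a`. So `j = k + i`.
-/

namespace Hairpin

variable {S : Type}

theorem prefix_append_prefix_iff {α : Type*} {a l s : List α} :
    a <+: l ++ a ++ s ↔ a <+: l ++ a :=
  ⟨fun h => prefix_of_prefix_length_le h (prefix_append _ _) (by simp),
    fun h => h.trans (prefix_append _ _)⟩

theorem strictMono_length_of_chain {α : Type*} {ι : Type*} [Preorder ι] {u : ι → List α}
    (hu : ∀ i j, i < j → u i <+: u j ∧ u i ≠ u j) : StrictMono fun i => (u i).length :=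
  fun i j hij =>
    let ⟨hpre, hne⟩ := hu i j hij
    hpre.length_le.lt_of_ne fun h => hne (hpre.eq_of_length h)

theorem prefix_append_of_mem_Pa {a w u : List S} (hw : a <+: w) (hu : u ∈ Pa a w) :
    a <+: u ++ a :=
  prefix_of_prefix_length_le hw hu (by simp)

theorem append_mem_Pa {a w x y : List S} (hxy : x ++ y ∈ Pa a w) (ha : a <+: y ++ a) :
    x ∈ Pa a w := by
  obtain ⟨s, hs⟩ := ha
  have : x ++ a <+: x ++ y ++ a := ⟨s, by simp [← hs]⟩
  exact this.trans hxy

section Index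

variable [DecidableEq S]

theorem inda_eq_sum (a x : List S) :
    inda a x = ∑ p ∈ Finset.range x.length, if a <+: (x ++ a).drop p then 1 else 0 :=
  Finset.card_filter _ _

theorem inda_append_s11 {a x y : List S} (ha : a <+: y ++ a) :
    inda a (x ++ y) = inda a x + inda a y := by
  obtain ⟨s, hs⟩ := ha
  rw [inda_eq_sum, inda_eq_sum, inda_eq_sum, length_append, Finset.sum_range_add]
  congr 1
  · refine Finset.sum_congr rfl fun p hp => ?_
    have hp : p ≤ x.length := (Finset.mem_range.mp hp).le
    rw [append_assoc, drop_append_of_le_length hp, drop_append_of_le_length hp, ← hs,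
      ← append_assoc]
    exact if_congr prefix_append_prefix_iff rfl rfl
  · refine Finset.sum_congr rfl fun q _ => ?_
    rw [append_assoc, drop_length_add_append]

theorem inda_eq_of_Pa_eq_range {a w : List S} {m : ℕ} {u : Fin m → List S}
    (hmono : StrictMono fun l => (u l).length) (hPu : Pa a w = Set.range u) (k : Fin m) :
    inda a (u k) = k := by
  have hmem : ∀ l, u l ∈ Pa a w := fun l => hPu ▸ Set.mem_range_self l
  suffices hocc : (Finset.range (u k).length).filter (fun p => a <+: (u k ++ a).drop p) =
      (Finset.Iio k).image fun l => (u l).length by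
    rw [inda, hocc, Finset.card_image_of_injective _ hmono.injective, Fin.card_Iio]
  ext p
  simp only [Finset.mem_filter, Finset.mem_range, Finset.mem_image, Finset.mem_Iio]
  constructor
  · rintro ⟨hp, hocc⟩
    have htake : take p (u k ++ a) ∈ Pa a w := by
      have : take p (u k ++ a) ++ a <+: u k ++ a := by
        simpa only [take_append_drop] using (prefix_append_right_inj (take p (u k ++ a))).mpr hocc
      exact this.trans (hmem k)
    rw [hPu] at htake
    obtain ⟨l, hl⟩ := htake
    have hlen : (u l).length = p := by
      simp only [hl, length_take, length_append]
      omega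
    exact ⟨l, hmono.lt_iff_lt.mp (hlen ▸ hp), hlen⟩
  · rintro ⟨l, hlk, rfl⟩
    refine ⟨hmono hlk, ?_⟩
    obtain ⟨s, hs⟩ : u l ++ a <+: u k ++ a :=
      prefix_of_prefix_length_le (hmem l) (hmem k) (by simpa using (hmono hlk).le)
    rw [← hs, append_assoc, drop_left]
    exact prefix_append _ _

theorem stmt11_general (a w : List S) (hw : a <+: w) (m : ℕ) (u : Fin m → List S)
    (huchain : ∀ i j : Fin m, i < j → u i <+: u j ∧ u i ≠ u j)
    (hPu : Pa a w = Set.range u)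
    (i j : Fin m) (hsuf : u i <:+ u j) :
    u j = u ⟨(j : ℕ) - (i : ℕ),
      lt_of_le_of_lt (Nat.sub_le _ _) j.isLt⟩ ++ u i := by
  obtain ⟨t, ht⟩ := hsuf
  have hmem : ∀ l, u l ∈ Pa a w := fun l => hPu ▸ Set.mem_range_self l
  have hai : a <+: u i ++ a := prefix_append_of_mem_Pa hw (hmem i)
  obtain ⟨k, rfl⟩ : t ∈ Set.range u := hPu ▸ append_mem_Pa (ht ▸ hmem j) hai
  have hind := inda_eq_of_Pa_eq_range (strictMono_length_of_chain huchain) hPu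
  have hk : (k : ℕ) = j - i := by
    have := congrArg (inda a) ht
    rw [inda_append_s11 hai, hind, hind, hind] at this
    omega
  rw [← ht, show (⟨j - i, _⟩ : Fin m) = k from Fin.ext hk.symm]

theorem stmt11 (a w : List S) (hw : a <+: w) (m : ℕ) (u : Fin m → List S)
    (huchain : ∀ i j : Fin m, i < j → u i <+: u j ∧ u i ≠ u j)
    (hPu : Pa a w = Set.range u)
    (i j : Fin m) (hij : i ≤ j) (hsuf : u i <:+ u j) :
    u j = u ⟨(j : ℕ) - (i : ℕ),
      lt_of_le_of_lt (Nat.sub_le _ _) j.isLt⟩ ++ u i :=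
  stmt11_general a w hw m u huchain hPu i j hsuf

end Index

end Hairpin
end
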